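/- For any word v of length n−1 over {\\, /} (equivalently, any path of n−1 steps), the set I(v) of complete binary trees with n internal vertices having interior canopy v is an interval of the Tamari lattice on complete binary trees with n internal vertices. -/
import Mathlib


/-- Complete binary trees: every vertex has 0 or 2 children
(`leaf` = external vertex, `node` = internal vertex). -/
inductive CTree where
  | leaf : CTree
  | node : CTree → CTree → CTree
deriving DecidableEq

/-- The number of internal vertices of a complete binary tree. -/
def isize : CTree → ℕ
  | .leaf => 0
  | .node l r => isize l + isize r + 1

/-- The sequence of external edges of a complete binary tree, recorded walking clockwise
around it starting at the root: `false` = left external edge (`\`), `true` = right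
external edge (`/`). -/
def extSeq : CTree → List Bool
  | .leaf => []
  | .node l r =>
      (if l = CTree.leaf then [false] else extSeq l) ++
      (if r = CTree.leaf then [true] else extSeq r)

/-- The word `c(T̄)` over `{\, /}`: the external edges of `T̄` in clockwise order,
omitting the first and the last ones (`false` = `\`, `true` = `/`). -/
def cword (t : CTree) : List Bool := ((extSeq t).drop 1).dropLast

/-- One-hole contexts, locating a vertex in a complete binary tree. -/
inductive Ctx where
  | hole : Ctx
  | left : Ctx → CTree → Ctx
  | right : CTree → Ctx → Ctx

/-- Fill the hole of a context with a tree. -/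
def Ctx.fill : Ctx → CTree → CTree
  | .hole, t => t
  | .left c r, t => CTree.node (c.fill t) r
  | .right l c, t => CTree.node l (c.fill t)

/-- Right rotation at some internal vertex `s` whose left child `t` is internal, with
`A`, `B` the left and right subtrees of `t` and `C` the right subtree of `s`: after the
rotation, `t` becomes the right child of `s`, `A` the left subtree of `s`, and `B`, `C`
the left and right subtrees of `t`. -/
def RotStep (T T' : CTree) : Prop :=
  ∃ (K : Ctx) (A B C : CTree),
    T = K.fill (CTree.node (CTree.node A B) C) ∧
    T' = K.fill (CTree.node A (CTree.node B C))

/-- The Tamari order on complete binary trees: the reflexive-transitive closure of the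
right-rotation covering relation. -/
def TamariLe : CTree → CTree → Prop := Relation.ReflTransGen RotStep

-- ===== auxiliary definitions =====

def lcomb : ℕ → CTree
  | 0 => .leaf
  | k+1 => .node (lcomb k) .leaf

def addL : CTree → CTree
  | .leaf => .leaf
  | .node l r => .node (.node l .leaf) r

def bTree : List Bool → CTree
  | [] => .node .leaf .leaf
  | false :: v => .node .leaf (bTree v)
  | true :: v => addL (bTree v)

def mirror : CTree → CTree
  | .leaf => .leaf
  | .node l r => .node (mirror r) (mirror l)

def aTree (v : List Bool) : CTree := mirror (bTree ((v.map not).reverse))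

def eL (t : CTree) : List Bool := if t = CTree.leaf then [false] else extSeq t
def eR (t : CTree) : List Bool := if t = CTree.leaf then [true] else extSeq t

lemma extSeq_node (l r : CTree) : extSeq (.node l r) = eL l ++ eR r := rfl

lemma eL_node (l r : CTree) : eL (.node l r) = extSeq (.node l r) := rfl
lemma eR_node (l r : CTree) : eR (.node l r) = extSeq (.node l r) := rfl
lemma eL_leaf : eL .leaf = [false] := rfl
lemma eR_leaf : eR .leaf = [true] := rfl

lemma eL_ne_nil (t : CTree) : eL t ≠ [] := by
  cases t with
  | leaf => simp [eL]
  | node l r =>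
    rw [eL_node, extSeq_node]
    intro h
    exact eL_ne_nil l (List.append_eq_nil_iff.mp h).1

lemma eR_ne_nil (t : CTree) : eR t ≠ [] := by
  cases t with
  | leaf => simp [eR]
  | node l r =>
    rw [eR_node, extSeq_node]
    intro h
    exact eR_ne_nil r (List.append_eq_nil_iff.mp h).2

lemma eL_length (t : CTree) : (eL t).length = isize t + 1 := by
  induction t with
  | leaf => simp [eL, isize]
  | node l r ihl ihr =>
    rw [eL_node, extSeq_node]
    have hr : (eR r).length = isize r + 1 := by
      cases r with
      | leaf => simp [eR, isize]
      | node a b => rw [eR_node, ← eL_node, ihr]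
    simp [List.length_append, ihl, hr, isize]; omega

lemma extSeq_length (l r : CTree) : (extSeq (.node l r)).length = isize (.node l r) + 1 := by
  rw [← eL_node, eL_length]

/-- extSeq of a node starts with `false` and ends with `true`. -/
lemma eL_head (t : CTree) : ∃ s, eL t = false :: s := by
  induction t with
  | leaf => exact ⟨[], rfl⟩
  | node l r ihl ihr =>
    obtain ⟨s, hs⟩ := ihl
    exact ⟨s ++ eR r, by rw [eL_node, extSeq_node, hs]; rfl⟩

lemma eR_last (t : CTree) : ∃ s, eR t = s ++ [true] := by
  induction t with
  | leaf => exact ⟨[], rfl⟩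
  | node l r ihl ihr =>
    obtain ⟨s, hs⟩ := ihr
    exact ⟨eL l ++ s, by rw [eR_node, extSeq_node, hs, List.append_assoc]⟩

lemma extSeq_form (l r : CTree) : ∃ u, extSeq (.node l r) = false :: u ++ [true] := by
  obtain ⟨s1, h1⟩ := eL_head l
  obtain ⟨s2, h2⟩ := eR_last r
  exact ⟨s1 ++ s2, by rw [extSeq_node, h1, h2]; simp⟩

lemma fill_ne_leaf (K : Ctx) (t : CTree) (h : t ≠ .leaf) : K.fill t ≠ .leaf := by
  cases K with
  | hole => exact h
  | left c r => simp [Ctx.fill]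
  | right l c => simp [Ctx.fill]

lemma isize_fill (K : Ctx) {X Y : CTree} (h : isize X = isize Y) :
    isize (K.fill X) = isize (K.fill Y) := by
  induction K with
  | hole => exact h
  | left c r ih => simp [Ctx.fill, isize, ih]
  | right l c ih => simp [Ctx.fill, isize, ih]

lemma extSeq_fill (K : Ctx) {X Y : CTree} (hX : X ≠ .leaf) (hY : Y ≠ .leaf)
    (h : extSeq X = extSeq Y) : extSeq (K.fill X) = extSeq (K.fill Y) := by
  induction K with
  | hole => exact h
  | left c r ih =>
    simp only [Ctx.fill, extSeq_node]
    rw [show eL (c.fill X) = extSeq (c.fill X) by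
          simp [eL, fill_ne_leaf c X hX],
        show eL (c.fill Y) = extSeq (c.fill Y) by
          simp [eL, fill_ne_leaf c Y hY], ih]
  | right l c ih =>
    simp only [Ctx.fill, extSeq_node]
    rw [show eR (c.fill X) = extSeq (c.fill X) by
          simp [eR, fill_ne_leaf c X hX],
        show eR (c.fill Y) = extSeq (c.fill Y) by
          simp [eR, fill_ne_leaf c Y hY], ih]

lemma rot_isize {T T' : CTree} (h : RotStep T T') : isize T = isize T' := by
  obtain ⟨K, A, B, C, h1, h2⟩ := h
  rw [h1, h2]
  exact isize_fill K (by simp [isize]; omega)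

lemma tamari_isize {T T' : CTree} (h : TamariLe T T') : isize T = isize T' := by
  induction h with
  | refl => rfl
  | tail _ h ih => exact ih.trans (rot_isize h)

def sumL : CTree → ℕ
  | .leaf => 0
  | .node l r => sumL l + sumL r + isize l

lemma sumL_fill (K : Ctx) {X Y : CTree} (hi : isize X = isize Y) (h : sumL Y < sumL X) :
    sumL (K.fill Y) < sumL (K.fill X) := by
  induction K with
  | hole => exact h
  | left c r ih =>
    simp only [Ctx.fill, sumL]
    have := isize_fill c hi
    omega
  | right l c ih => simp only [Ctx.fill, sumL]; omega

lemma rot_sumL {T T' : CTree} (h : RotStep T T') : sumL T' < sumL T := by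
  obtain ⟨K, A, B, C, h1, h2⟩ := h
  rw [h1, h2]
  exact sumL_fill K (by simp [isize]; omega) (by simp [sumL, isize]; omega)

/-- Max-normal-form: every internal left child has a leaf right subtree. -/
inductive MaxF : CTree → Prop
  | leaf : MaxF .leaf
  | nodeL (r : CTree) : MaxF r → MaxF (.node .leaf r)
  | nodeN (A C : CTree) : MaxF (.node A .leaf) → MaxF C → MaxF (.node (.node A .leaf) C)

lemma maxF_or_rot (T : CTree) :
    MaxF T ∨ ∃ (K : Ctx) (A B C : CTree),
      T = K.fill (.node (.node A B) C) ∧ B ≠ CTree.leaf := by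
  induction T with
  | leaf => exact Or.inl MaxF.leaf
  | node L R ihl ihr =>
    rcases ihr with hR | ⟨K, A, B, C, hK, hB⟩
    · cases L with
      | leaf => exact Or.inl (MaxF.nodeL R hR)
      | node A B =>
        cases B with
        | node b1 b2 =>
          exact Or.inr ⟨.hole, A, .node b1 b2, R, rfl, by simp⟩
        | leaf =>
          rcases ihl with hL | ⟨K, A', B', C', hK, hB⟩
          · exact Or.inl (MaxF.nodeN A R hL hR)
          · exact Or.inr ⟨.left K R, A', B', C', by rw [hK]; rfl, hB⟩
    · exact Or.inr ⟨.right L K, A, B, C, by rw [hK]; rfl, hB⟩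

lemma maxF_lcomb_shape : ∀ (A : CTree), MaxF (.node A .leaf) → ∃ j, A = lcomb j := by
  intro A
  induction A with
  | leaf => exact fun _ => ⟨0, rfl⟩
  | node A' B' ih =>
    intro h
    cases h with
    | nodeN _ _ h1 _ =>
      obtain ⟨j, hj⟩ := ih h1
      exact ⟨j + 1, by rw [hj]; rfl⟩

lemma maxF_node_lcomb : ∀ (k : ℕ) (R : CTree), MaxF R → MaxF (.node (lcomb k) R) := by
  intro k
  induction k with
  | zero => exact fun R hR => MaxF.nodeL R hR
  | succ k ih =>
    intro R hR
    exact MaxF.nodeN (lcomb k) R (ih .leaf MaxF.leaf) hR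

lemma eL_lcomb (k : ℕ) : eL (lcomb k) = false :: List.replicate k true := by
  induction k with
  | zero => rfl
  | succ k ih =>
    show eL (.node (lcomb k) .leaf) = _
    rw [eL_node, extSeq_node, ih, eR_leaf]
    simp [List.replicate_succ']

lemma bSpec : ∀ v : List Bool,
    ∃ (k : ℕ) (R : CTree), bTree v = .node (lcomb k) R ∧
      extSeq (bTree v) = false :: v ++ [true] := by
  intro v
  induction v with
  | nil => exact ⟨0, .leaf, rfl, rfl⟩
  | cons x v ih =>
    obtain ⟨k, R, hshape, hseq⟩ := ih
    cases x with
    | false =>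
      refine ⟨0, bTree v, rfl, ?_⟩
      show extSeq (.node .leaf (bTree v)) = _
      rw [extSeq_node, eL_leaf]
      have : eR (bTree v) = extSeq (bTree v) := by
        rw [hshape]; rfl
      rw [this, hseq]
      rfl
    | true =>
      refine ⟨k + 1, R, ?_, ?_⟩
      · show addL (bTree v) = _
        rw [hshape]; rfl
      · show extSeq (addL (bTree v)) = _
        rw [hshape] at hseq ⊢
        show extSeq (.node (.node (lcomb k) .leaf) R) = _
        rw [extSeq_node] at hseq ⊢
        rw [eL_lcomb] at hseq
        rw [show eL (.node (lcomb k) .leaf) = eL (lcomb (k+1)) from rfl, eL_lcomb]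
        have hv : List.replicate k true ++ eR R = v ++ [true] := by
          have := hseq
          simpa using this
        simp only [List.replicate_succ, List.cons_append, List.append_assoc] at *
        rw [hv]

lemma bTree_shape (v : List Bool) : ∃ k R, bTree v = .node (lcomb k) R :=
  let ⟨k, R, h, _⟩ := bSpec v
  ⟨k, R, h⟩

lemma extSeq_bTree (v : List Bool) : extSeq (bTree v) = false :: v ++ [true] :=
  (bSpec v).choose_spec.choose_spec.2

lemma bTree_ne_leaf (v : List Bool) : bTree v ≠ .leaf := by
  obtain ⟨k, R, h⟩ := bTree_shape v
  rw [h]; simp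

lemma isize_lcomb (k : ℕ) : isize (lcomb k) = k := by
  induction k with
  | zero => rfl
  | succ k ih => show isize (.node (lcomb k) .leaf) = _; simp [isize, ih]

lemma maxF_eq_bTree_aux : ∀ (N : ℕ) (T : CTree), isize T ≤ N → MaxF T →
    ∀ v : List Bool, extSeq T = false :: v ++ [true] → T = bTree v := by
  intro N
  induction N with
  | zero =>
    intro T hT hM v hv
    cases T with
    | leaf => simp [extSeq] at hv
    | node l r => simp [isize] at hT
  | succ N ih =>
    intro T hT hM v hv
    cases hM with
    | leaf => simp [extSeq] at hv
    | nodeL r hr =>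
      cases r with
      | leaf =>
        have : false :: v ++ [true] = [false, true] := hv.symm
        have hv0 : v = [] := by
          cases v with
          | nil => rfl
          | cons x v' => simp at this
        rw [hv0]; rfl
      | node r1 r2 =>
        obtain ⟨u, hu⟩ := extSeq_form r1 r2
        have hex : extSeq (.node .leaf (.node r1 r2)) =
            false :: (false :: u) ++ [true] := by
          rw [extSeq_node, eL_leaf, eR_node, hu]; rfl
        have hvu : v = false :: u := by
          rw [hv] at hex
          exact List.append_cancel_right
            (List.cons_injective.eq_iff.mp hex : v ++ [true] = (false :: u) ++ [true])
        have hsz : isize (.node r1 r2) ≤ N := by simp [isize] at hT ⊢; omega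
        have := ih (.node r1 r2) hsz hr u hu
        rw [hvu]
        show CTree.node .leaf (.node r1 r2) = .node .leaf (bTree u)
        rw [← this]
    | nodeN A C h1 h2 =>
      obtain ⟨j, hj⟩ := maxF_lcomb_shape A h1
      subst hj
      have hstep : extSeq (.node (.node (lcomb j) .leaf) C) =
          false :: (List.replicate (j+1) true ++ eR C) := by
        rw [extSeq_node,
          show eL (.node (lcomb j) .leaf) = eL (lcomb (j+1)) from rfl, eL_lcomb]
        rfl
      rw [hv] at hstep
      have hv1 : v ++ [true] = true :: (List.replicate j true ++ eR C) := by
        have : v ++ [true] = List.replicate (j+1) true ++ eR C :=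
          List.cons_injective.eq_iff.mp hstep
        rw [this, List.replicate_succ]; rfl
      obtain ⟨v₀, hv₀, hv2⟩ : ∃ v₀, v = true :: v₀ ∧
          v₀ ++ [true] = List.replicate j true ++ eR C := by
        cases v with
        | nil =>
          exfalso
          simp only [List.nil_append, List.cons.injEq, true_and] at hv1
          rw [eq_comm, List.append_eq_nil_iff] at hv1
          exact eR_ne_nil C hv1.2
        | cons x v' =>
          simp only [List.cons_append, List.cons.injEq] at hv1
          exact ⟨v', by rw [hv1.1], hv1.2⟩
      subst hv₀
      have hT0 : extSeq (.node (lcomb j) C) = false :: v₀ ++ [true] := by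
        rw [extSeq_node, eL_lcomb]
        show false :: (List.replicate j true ++ eR C) = _
        rw [← hv2]; rfl
      have hsz : isize (.node (lcomb j) C) ≤ N := by
        have h1 : isize (.node (.node (lcomb j) .leaf) C) ≤ N + 1 := hT
        simp [isize, isize_lcomb] at h1 ⊢; omega
      have heq := ih (.node (lcomb j) C) hsz (maxF_node_lcomb j C h2) v₀ hT0
      show _ = bTree (true :: v₀)
      show _ = addL (bTree v₀)
      rw [← heq]
      rfl

lemma maxF_eq_bTree {T : CTree} (hM : MaxF T) {v : List Bool}
    (hv : extSeq T = false :: v ++ [true]) : T = bTree v :=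
  maxF_eq_bTree_aux (isize T) T le_rfl hM v hv

lemma extSeq_rot_eq {A B C : CTree} (hB : B ≠ .leaf) :
    extSeq (.node (.node A B) C) = extSeq (.node A (.node B C)) := by
  rw [extSeq_node, extSeq_node, eL_node, eR_node, extSeq_node, extSeq_node]
  rw [show eR B = extSeq B by simp [eR, hB], show eL B = extSeq B by simp [eL, hB]]
  rw [List.append_assoc]

lemma keyMax_aux : ∀ (N : ℕ) (T : CTree), sumL T ≤ N →
    ∀ v : List Bool, extSeq T = false :: v ++ [true] → TamariLe T (bTree v) := by
  intro N
  induction N with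
  | zero =>
    intro T hT v hv
    rcases maxF_or_rot T with hM | ⟨K, A, B, C, hK, hB⟩
    · rw [maxF_eq_bTree hM hv]; exact Relation.ReflTransGen.refl
    · exfalso
      have : RotStep T (K.fill (.node A (.node B C))) := ⟨K, A, B, C, hK, rfl⟩
      have := rot_sumL this
      omega
  | succ N ih =>
    intro T hT v hv
    rcases maxF_or_rot T with hM | ⟨K, A, B, C, hK, hB⟩
    · rw [maxF_eq_bTree hM hv]; exact Relation.ReflTransGen.refl
    · set T' := K.fill (.node A (.node B C)) with hT'
      have hrot : RotStep T T' := ⟨K, A, B, C, hK, rfl⟩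
      have hseq : extSeq T' = extSeq T := by
        rw [hK, hT']
        exact (extSeq_fill K (by simp) (by simp) (extSeq_rot_eq hB)).symm
      have hsum : sumL T' ≤ N := by have := rot_sumL hrot; omega
      have := ih T' hsum v (by rw [hseq, hv])
      exact Relation.ReflTransGen.head hrot this

lemma keyMax {T : CTree} {v : List Bool} (hv : extSeq T = false :: v ++ [true]) :
    TamariLe T (bTree v) :=
  keyMax_aux (sumL T) T le_rfl v hv

lemma mirror_mirror (T : CTree) : mirror (mirror T) = T := by
  induction T with
  | leaf => rfl
  | node l r ihl ihr => show CTree.node _ _ = _; rw [ihl, ihr]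

lemma mirror_eq_leaf {T : CTree} : mirror T = .leaf ↔ T = .leaf := by
  cases T <;> simp [mirror]

lemma eLR_mirror (T : CTree) :
    eL (mirror T) = ((eR T).reverse).map not ∧
    eR (mirror T) = ((eL T).reverse).map not := by
  induction T with
  | leaf => constructor <;> rfl
  | node l r ihl ihr =>
    have hm : mirror (.node l r) = .node (mirror r) (mirror l) := rfl
    have hext : extSeq (mirror (.node l r)) = ((extSeq (.node l r)).reverse).map not := by
      rw [hm, extSeq_node, extSeq_node, ihr.1, ihl.2]
      simp
    constructor
    · rw [show eL (mirror (.node l r)) = extSeq (mirror (.node l r)) by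
        rw [hm]; rfl, hext]; rfl
    · rw [show eR (mirror (.node l r)) = extSeq (mirror (.node l r)) by
        rw [hm]; rfl, hext]; rfl

lemma extSeq_mirror (T : CTree) : extSeq (mirror T) = ((extSeq T).reverse).map not := by
  cases T with
  | leaf => rfl
  | node l r =>
    show eL (mirror r) ++ eR (mirror l) = _
    rw [(eLR_mirror r).1, (eLR_mirror l).2, extSeq_node]
    simp

def mirrorCtx : Ctx → Ctx
  | .hole => .hole
  | .left c r => .right (mirror r) (mirrorCtx c)
  | .right l c => .left (mirrorCtx c) (mirror l)

lemma fill_mirror (K : Ctx) (t : CTree) :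
    mirror (K.fill t) = (mirrorCtx K).fill (mirror t) := by
  induction K with
  | hole => rfl
  | left c r ih => show CTree.node _ _ = _; rw [ih]; rfl
  | right l c ih => show CTree.node _ _ = _; rw [ih]; rfl

lemma rot_mirror {T T' : CTree} (h : RotStep T T') : RotStep (mirror T') (mirror T) := by
  obtain ⟨K, A, B, C, h1, h2⟩ := h
  refine ⟨mirrorCtx K, mirror C, mirror B, mirror A, ?_, ?_⟩
  · rw [h2, fill_mirror]; rfl
  · rw [h1, fill_mirror]; rfl

lemma tamari_mirror {T T' : CTree} (h : TamariLe T T') :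
    TamariLe (mirror T') (mirror T) := by
  induction h with
  | refl => exact Relation.ReflTransGen.refl
  | tail _ hstep ih => exact Relation.ReflTransGen.head (rot_mirror hstep) ih

lemma extSeq_aTree (v : List Bool) : extSeq (aTree v) = false :: v ++ [true] := by
  unfold aTree
  rw [extSeq_mirror, extSeq_bTree]
  simp [Function.comp_def]

lemma keyMin {T : CTree} {v : List Bool} (hv : extSeq T = false :: v ++ [true]) :
    TamariLe (aTree v) T := by
  have hm : extSeq (mirror T) = false :: ((v.map not).reverse) ++ [true] := by
    rw [extSeq_mirror, hv]
    simp [Function.comp_def]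
  have := tamari_mirror (keyMax hm)
  rw [mirror_mirror] at this
  exact this

def Ge2 (x y : Bool) : Prop := y ≤ x

lemma forall₂_ge_refl (l : List Bool) : List.Forall₂ Ge2 l l :=
  List.forall₂_same.mpr (fun x _ => le_refl x)

lemma forall₂_ge_trans : ∀ {a b c : List Bool},
    List.Forall₂ Ge2 a b → List.Forall₂ Ge2 b c → List.Forall₂ Ge2 a c := by
  intro a b c hab
  induction hab generalizing c with
  | nil => intro h; cases h; exact List.Forall₂.nil
  | cons hxy _ ih =>
    intro h
    cases h with
    | cons hyz htl => exact List.Forall₂.cons (le_trans hyz hxy) (ih htl)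

lemma forall₂_ge_antisymm : ∀ {a b : List Bool},
    List.Forall₂ Ge2 a b → List.Forall₂ Ge2 b a → a = b := by
  intro a b hab
  induction hab with
  | nil => intro _; rfl
  | cons hxy _ ih =>
    intro h
    cases h with
    | cons hyx htl => rw [le_antisymm hxy hyx, ih htl]

lemma extSeq_fill₂ (K : Ctx) {X Y : CTree} (hX : X ≠ .leaf) (hY : Y ≠ .leaf)
    (h : List.Forall₂ Ge2 (extSeq X) (extSeq Y)) :
    List.Forall₂ Ge2 (extSeq (K.fill X)) (extSeq (K.fill Y)) := by
  induction K with
  | hole => exact h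
  | left c r ih =>
    simp only [Ctx.fill, extSeq_node]
    rw [show eL (c.fill X) = extSeq (c.fill X) by simp [eL, fill_ne_leaf c X hX],
        show eL (c.fill Y) = extSeq (c.fill Y) by simp [eL, fill_ne_leaf c Y hY]]
    exact List.rel_append ih (forall₂_ge_refl _)
  | right l c ih =>
    simp only [Ctx.fill, extSeq_node]
    rw [show eR (c.fill X) = extSeq (c.fill X) by simp [eR, fill_ne_leaf c X hX],
        show eR (c.fill Y) = extSeq (c.fill Y) by simp [eR, fill_ne_leaf c Y hY]]
    exact List.rel_append (forall₂_ge_refl _) ih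

lemma rot_forall₂ {T T' : CTree} (h : RotStep T T') :
    List.Forall₂ Ge2 (extSeq T) (extSeq T') := by
  obtain ⟨K, A, B, C, h1, h2⟩ := h
  rw [h1, h2]
  apply extSeq_fill₂ K (by simp) (by simp)
  by_cases hB : B = CTree.leaf
  · subst hB
    have e1 : extSeq (.node (.node A .leaf) C) = (eL A ++ [true]) ++ eR C := by
      rw [extSeq_node, eL_node, extSeq_node, eR_leaf]
    have e2 : extSeq (.node A (.node .leaf C)) = eL A ++ ([false] ++ eR C) := by
      rw [extSeq_node, eR_node, extSeq_node, eL_leaf]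
    rw [e1, e2, List.append_assoc]
    refine List.rel_append (forall₂_ge_refl _) ?_
    refine List.rel_append ?_ (forall₂_ge_refl _)
    exact List.Forall₂.cons (by simp [Ge2]) List.Forall₂.nil
  · rw [extSeq_rot_eq hB]
    exact forall₂_ge_refl _

lemma tamari_forall₂ {T T' : CTree} (h : TamariLe T T') :
    List.Forall₂ Ge2 (extSeq T) (extSeq T') := by
  induction h with
  | refl => exact forall₂_ge_refl _
  | tail _ hstep ih => exact forall₂_ge_trans ih (rot_forall₂ hstep)

lemma isize_bTree (v : List Bool) : isize (bTree v) = v.length + 1 := by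
  obtain ⟨k, R, hsh⟩ := bTree_shape v
  have h1 := extSeq_length (lcomb k) R
  rw [← hsh, extSeq_bTree] at h1
  simp at h1
  omega

lemma cword_of_extSeq {T : CTree} {v : List Bool}
    (h : extSeq T = false :: v ++ [true]) : cword T = v := by
  rw [cword, h]
  simp


/-- **Proposition 9.** For any word `v` of length `n - 1` over `{\, /}`, the set `I(v)`
of complete binary trees with `n` internal vertices and interior canopy `v` is an
interval of the Tamari lattice on complete binary trees with `n` internal vertices. -/
theorem canopy_fiber_is_interval (n : ℕ) (hn : 0 < n) (v : List Bool)
    (hv : v.length = n - 1) :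
    ∃ a b : CTree,
      {T : CTree | isize T = n ∧ cword T = v} =
        {T : CTree | TamariLe a T ∧ TamariLe T b} := by
  refine ⟨aTree v, bTree v, ?_⟩
  ext T
  simp only [Set.mem_setOf_eq]
  constructor
  · rintro ⟨h1, h2⟩
    cases T with
    | leaf => simp [isize] at h1; omega
    | node l r =>
      obtain ⟨u, hu⟩ := extSeq_form l r
      have : u = v := by rw [← h2, cword_of_extSeq hu]
      subst this
      exact ⟨keyMin hu, keyMax hu⟩
  · rintro ⟨ha, hb⟩
    have f1 := tamari_forall₂ ha
    have f2 := tamari_forall₂ hb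
    rw [extSeq_aTree] at f1
    rw [extSeq_bTree] at f2
    have hEq : false :: v ++ [true] = extSeq T := forall₂_ge_antisymm f1 f2
    constructor
    · have := tamari_isize hb
      rw [isize_bTree] at this
      omega
    · exact cword_of_extSeq hEq.symm
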